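/- arXiv:2107.09277 — 2 statements merged into one kernel-verified Lean document; each statement's English description precedes it below -/
import Mathlib

section
/- Let R be a reduced Noetherian commutative ring with connected spectrum, and M a finitely generated R-module. If Supp(M) = Spec R and V(Fitt_1(M)) = ∅ (i.e., the first Fitting ideal is the unit ideal), then M is a flat R-module of constant rank one, i.e., M is an invertible module. -/
/-!
At a prime `p`, `Fitt₁ M = R` provides an `(m - 1)`-minor `d` of the presentation matrix with
`d ∉ p`. Cramer's rule for the corresponding `m - 1` relations shows that `d` multiplies every
generator into the span of the one generator `x₀` whose row the minor omits, so `M_p` is generated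
by `x₀`. As `R` is reduced and `Supp M = Spec R`, the annihilator of `M` lies in the nilradical,
hence vanishes; for finite `M` this survives localization, so the cyclic module `M_p` is `R_p`.
Flatness is local on maximal ideals.
-/

/-- The `k`-th Fitting ideal of the module presented by the matrix `A` (with `m` generators):
the ideal generated by the `(m-k) × (m-k)` minors of `A`. -/
noncomputable def fittIdeal {R : Type*} [CommRing R] {m n : ℕ}
    (A : Matrix (Fin m) (Fin n) R) (k : ℕ) : Ideal R :=
  Ideal.span { x | ∃ (f : Fin (m - k) → Fin m) (g : Fin (m - k) → Fin n),
    x = (A.submatrix f g).det }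

open Submodule Set Function
open scoped Matrix

theorem Matrix.det_smul_eq_zero_of_forall_sum_smul_eq_zero {R N ι : Type*} [CommRing R]
    [AddCommGroup N] [Module R N] [Fintype ι] [DecidableEq ι] (D : Matrix ι ι R) (u : ι → N)
    (h : ∀ l, ∑ k, D l k • u k = 0) (k : ι) : D.det • u k = 0 :=
  calc D.det • u k = ∑ k', (D.adjugate * D) k k' • u k' := by
        simp [Matrix.adjugate_mul, Matrix.one_apply, ite_smul]
    _ = ∑ l, D.adjugate k l • ∑ k', D l k' • u k' := by
        simp only [Matrix.mul_apply, Finset.smul_sum, Finset.sum_smul, smul_smul]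
        exact Finset.sum_comm
    _ = 0 := by simp [h]

theorem Matrix.injective_of_det_submatrix_ne_zero {R ι ι' κ : Type*} [CommRing R] [Fintype κ]
    [DecidableEq κ] (A : Matrix ι ι' R) {f : κ → ι} {g : κ → ι'}
    (hd : (A.submatrix f g).det ≠ 0) : Injective f := by
  intro a b hab
  by_contra hne
  exact hd (Matrix.det_zero_of_row_eq hne (by ext; simp [hab]))

theorem Matrix.det_submatrix_smul_mem_span_compl_range {R M ι ι' κ : Type*} [CommRing R]
    [AddCommGroup M] [Module R M] [Fintype ι] [Fintype κ] [DecidableEq κ]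
    (A : Matrix ι ι' R) (x : ι → M) (hrel : ∀ j, ∑ i, A i j • x i = 0)
    {f : κ → ι} (hf : Injective f) (g : κ → ι') (i : ι) :
    (A.submatrix f g).det • x i ∈ span R (x '' (range f)ᶜ) := by
  set N := span R (x '' (range f)ᶜ)
  obtain ⟨k, rfl⟩ | hi := em (i ∈ range f)
  · rw [← ker_mkQ N, LinearMap.mem_ker, map_smul, ← Matrix.det_transpose]
    refine Matrix.det_smul_eq_zero_of_forall_sum_smul_eq_zero _ (fun k ↦ N.mkQ (x (f k)))
      (fun l ↦ ?_) k
    have hout : ∀ i ∉ range f, A i (g l) • N.mkQ (x i) = 0 := fun i hi ↦ by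
      rw [← map_smul, ← LinearMap.mem_ker, ker_mkQ]
      exact N.smul_mem _ (subset_span ⟨i, hi, rfl⟩)
    calc ∑ k, (A.submatrix f g)ᵀ l k • N.mkQ (x (f k)) = ∑ i, A i (g l) • N.mkQ (x i) :=
          Fintype.sum_of_injective f hf _ _ hout fun _ ↦ rfl
      _ = 0 := by simp_rw [← map_smul, ← map_sum, hrel, map_zero]
  · exact N.smul_mem _ (subset_span ⟨i, hi, rfl⟩)

theorem Fin.exists_compl_range_eq_singleton {m : ℕ} (hm : m ≠ 0) {f : Fin (m - 1) → Fin m}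
    (hf : Injective f) : ∃ i₀, (range f)ᶜ = {i₀} := by
  rw [← Set.ncard_eq_one]
  have := Set.ncard_add_ncard_compl (range f)
  rw [Set.ncard_range_of_injective hf, Nat.card_eq_fintype_card, Nat.card_eq_fintype_card,
    Fintype.card_fin, Fintype.card_fin] at this
  omega

theorem LocalizedModule.span_image_eq_top_of_smul_mem {R M : Type*} [CommRing R]
    [AddCommGroup M] [Module R M] (S : Submonoid R) (T : Set M) {d : R} (hd : d ∈ S)
    (h : ∀ y : M, d • y ∈ span R T) :
    span (Localization S) (mkLinearMap S M '' T) = ⊤ := by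
  rw [← localized'_span (Localization S) S (mkLinearMap S M), eq_top_iff,
    ← localized'_top (Localization S) S (mkLinearMap S M)]
  refine localized'_le_localized'_of_smul_le _ _ _ ⟨d, hd⟩ ?_
  rintro _ ⟨y, -, rfl⟩
  exact h y

theorem LocalizedModule.annihilator_eq_bot {R M : Type*} [CommRing R] [AddCommGroup M]
    [Module R M] [Module.Finite R M] (S : Submonoid R) (h : Module.annihilator R M = ⊥) :
    Module.annihilator (Localization S) (LocalizedModule S M) = ⊥ := by
  obtain ⟨T, hT⟩ := ‹Module.Finite R M›
  refine (Submodule.eq_bot_iff _).mpr fun a ha ↦ ?_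
  obtain ⟨r, s, rfl⟩ := IsLocalization.exists_mk'_eq S a
  have hkill : ∀ y : M, ∃ t : S, (t : R) • r • y = 0 := fun y ↦ by
    have := Module.mem_annihilator.mp ha (LocalizedModule.mk y 1)
    rw [← Localization.mk_eq_mk'_apply, LocalizedModule.mk_smul_mk, ← LocalizedModule.zero_mk 1,
      LocalizedModule.mk_eq] at this
    obtain ⟨t, ht⟩ := this
    exact ⟨t, by simpa [Submonoid.smul_def] using ht⟩
  choose t ht using hkill
  have hprod : (∏ y ∈ T, (t y : R)) * r ∈ Module.annihilator R M := by
    rw [← annihilator_top, ← hT, mem_annihilator_span]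
    rintro ⟨y, hy⟩
    obtain ⟨c, hc⟩ := Finset.dvd_prod_of_mem (fun y ↦ (t y : R)) hy
    show _ • y = 0
    rw [hc, mul_comm _ c, mul_assoc, mul_smul, mul_smul, ht, smul_zero]
  rw [h, Ideal.mem_bot, ← Submonoid.coe_finsetProd] at hprod
  exact (IsLocalization.mk'_eq_zero_iff r s).mpr ⟨_, hprod⟩

theorem nonempty_linearEquiv_self_of_span_singleton_eq_top {A N : Type*} [CommRing A]
    [AddCommGroup N] [Module A N] {x : N} (hx : span A {x} = ⊤)
    (hann : Module.annihilator A N = ⊥) : Nonempty (N ≃ₗ[A] A) := by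
  refine ⟨(LinearEquiv.ofBijective (LinearMap.toSpanSingleton A N x) ⟨?_, ?_⟩).symm⟩
  · refine (injective_iff_map_eq_zero _).mpr fun a ha ↦ ?_
    rw [← Ideal.mem_bot, ← hann, ← annihilator_top, ← hx, mem_annihilator_span_singleton]
    exact ha
  · rw [← LinearMap.range_eq_top, ← LinearMap.span_singleton_eq_range, hx]

theorem Module.annihilator_eq_bot_of_support_eq_univ {R M : Type*} [CommRing R] [IsReduced R]
    [AddCommGroup M] [Module R M] (h : Module.support R M = univ) :
    Module.annihilator R M = ⊥ := by
  rw [← le_bot_iff, ← Ideal.zero_eq_bot, ← nilradical_eq_zero, nilradical_eq_sInf]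
  exact le_sInf fun p hp ↦
    Module.annihilator_le_of_mem_support (p := ⟨p, hp⟩) (h ▸ mem_univ _)

theorem LinearMap.span_range_map_single_eq_top {R M ι : Type*} [CommRing R] [AddCommGroup M]
    [Module R M] [Fintype ι] [DecidableEq ι] {π : (ι → R) →ₗ[R] M} (hπ : Surjective π) :
    span R (Set.range fun i ↦ π (Pi.single i 1)) = ⊤ := by
  rw [show (fun i ↦ π (Pi.single i 1)) = π ∘ Pi.basisFun R ι by ext; simp, Set.range_comp,
    span_image, (Pi.basisFun R ι).span_eq, Submodule.map_top, LinearMap.range_eq_top.mpr hπ]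

theorem LinearMap.sum_smul_map_single_eq_zero {R M ι ι' : Type*} [CommRing R] [AddCommGroup M]
    [Module R M] [Fintype ι] [Fintype ι'] [DecidableEq ι] [DecidableEq ι']
    {π : (ι → R) →ₗ[R] M} {A : Matrix ι ι' R} (h : LinearMap.range A.mulVecLin ≤ ker π)
    (j : ι') : ∑ i, A i j • π (Pi.single i 1) = 0 := by
  have hcol : π (A.col j) = 0 := by
    rw [← A.mulVec_single_one, ← Matrix.mulVecLin_apply, ← LinearMap.mem_ker]
    exact h (LinearMap.mem_range_self _ _)
  rw [← hcol, ← Finset.univ_sum_single (A.col j), map_sum]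
  refine Finset.sum_congr rfl fun i _ ↦ ?_
  rw [← map_smul, ← Pi.single_smul', smul_eq_mul, mul_one, Matrix.col_apply]

theorem fittIdeal_exists_det_submatrix_notMem {R : Type*} [CommRing R] {m n : ℕ}
    {A : Matrix (Fin m) (Fin n) R} {k : ℕ} (h : fittIdeal A k = ⊤) {p : Ideal R}
    (hp : p ≠ ⊤) :
    ∃ (f : Fin (m - k) → Fin m) (g : Fin (m - k) → Fin n), (A.submatrix f g).det ∉ p := by
  by_contra! hle
  refine hp (top_le_iff.mp (h ▸ Ideal.span_le.mpr ?_))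
  rintro _ ⟨f, g, rfl⟩
  exact hle f g

theorem nonempty_localizedModule_linearEquiv_of_det_submatrix_notMem {R M : Type*} [CommRing R]
    [AddCommGroup M] [Module R M] {m n : ℕ} (A : Matrix (Fin m) (Fin n) R) (x : Fin m → M)
    (hx : span R (range x) = ⊤) (hrel : ∀ j, ∑ i, A i j • x i = 0)
    (hann : Module.annihilator R M = ⊥) (p : Ideal R) [p.IsPrime]
    {f : Fin (m - 1) → Fin m} {g : Fin (m - 1) → Fin n} (hd : (A.submatrix f g).det ∉ p) :
    Nonempty (LocalizedModule p.primeCompl M ≃ₗ[Localization.AtPrime p]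
      Localization.AtPrime p) := by
  have : Module.Finite R M := ⟨fg_def.mpr ⟨_, finite_range x, hx⟩⟩
  have hm : m ≠ 0 := by
    rintro rfl
    have : Subsingleton M := by simpa [range_eq_empty, subsingleton_iff_bot_eq_top] using hx
    have htop : (⊤ : Ideal R) = ⊥ := (Module.annihilator_eq_top_iff.mpr this).symm.trans hann
    exact ‹p.IsPrime›.ne_top (top_le_iff.mp (htop ▸ bot_le))
  have hf := A.injective_of_det_submatrix_ne_zero fun h ↦ hd (h ▸ p.zero_mem)
  obtain ⟨i₀, hi₀⟩ := Fin.exists_compl_range_eq_singleton hm hf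
  set d := (A.submatrix f g).det
  have hsmul : ∀ y : M, d • y ∈ span R {x i₀} := by
    have : span R (range x) ≤ (span R {x i₀}).comap (LinearMap.lsmul R M d) := by
      rw [span_le]
      rintro _ ⟨i, rfl⟩
      simpa [hi₀] using A.det_submatrix_smul_mem_span_compl_range x hrel hf g i
    exact fun y ↦ this (hx ▸ mem_top)
  have hspan := LocalizedModule.span_image_eq_top_of_smul_mem p.primeCompl {x i₀} hd hsmul
  rw [image_singleton] at hspan
  exact nonempty_linearEquiv_self_of_span_singleton_eq_top hspan
    (LocalizedModule.annihilator_eq_bot _ hann)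

theorem stmt3_general {R M : Type*} [CommRing R] [IsReduced R]
    [AddCommGroup M] [Module R M] {m n : ℕ}
    (A : Matrix (Fin m) (Fin n) R) (π : (Fin m → R) →ₗ[R] M)
    (hsurj : Function.Surjective π)
    (hker : LinearMap.ker π = LinearMap.range A.mulVecLin)
    (hsupp : Module.support R M = Set.univ)
    (hfitt : fittIdeal A 1 = ⊤) :
    Module.Flat R M ∧
      ∀ p : PrimeSpectrum R,
        Nonempty (LocalizedModule p.asIdeal.primeCompl M ≃ₗ[Localization.AtPrime p.asIdeal]
          Localization.AtPrime p.asIdeal) := by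
  have hloc : ∀ (p : Ideal R) [p.IsPrime], Nonempty (LocalizedModule p.primeCompl M ≃ₗ[
      Localization.AtPrime p] Localization.AtPrime p) := fun p hp ↦ by
    obtain ⟨f, g, hd⟩ := fittIdeal_exists_det_submatrix_notMem hfitt hp.ne_top
    exact nonempty_localizedModule_linearEquiv_of_det_submatrix_notMem A _
      (LinearMap.span_range_map_single_eq_top hsurj)
      (LinearMap.sum_smul_map_single_eq_zero hker.ge)
      (Module.annihilator_eq_bot_of_support_eq_univ hsupp) p hd
  refine ⟨Module.flat_of_localized_maximal M fun P _ ↦ ?_, fun p ↦ hloc p.asIdeal⟩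
  obtain ⟨e⟩ := hloc P
  have := IsLocalization.flat (Localization.AtPrime P) P.primeCompl
  exact Module.Flat.of_linearEquiv (e.restrictScalars R)

/-- Let `R` be a reduced Noetherian commutative ring with connected spectrum and `M` a finitely
generated `R`-module (presented by a matrix `A`). If `Supp M = Spec R` and
`V(Fitt₁ M) = ∅` (i.e. `Fitt₁ M = R`), then `M` is a flat `R`-module of constant rank one,
i.e. `M` is an invertible module. -/
theorem stmt3 {R M : Type*} [CommRing R] [IsNoetherianRing R] [IsReduced R]
    [ConnectedSpace (PrimeSpectrum R)]
    [AddCommGroup M] [Module R M] {m n : ℕ}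
    (A : Matrix (Fin m) (Fin n) R) (π : (Fin m → R) →ₗ[R] M)
    (hsurj : Function.Surjective π)
    (hker : LinearMap.ker π = LinearMap.range A.mulVecLin)
    (hsupp : Module.support R M = Set.univ)
    (hfitt : fittIdeal A 1 = ⊤) :
    Module.Flat R M ∧
      ∀ p : PrimeSpectrum R,
        Nonempty (LocalizedModule p.asIdeal.primeCompl M ≃ₗ[Localization.AtPrime p.asIdeal]
          Localization.AtPrime p.asIdeal) :=
  stmt3_general A π hsurj hker hsupp hfitt
end

section
/- Let R → S be a ring map with S a finitely generated R-module, M a finitely generated R-module, and suppose R is Noetherian. If M ⊗_R R_red is flat over R_red and Tor_1^R(R_red, M) = 0, then M is flat over R, where R_red = R/nilradical(R). -/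
/-!
Let `I` be the nilradical, nilpotent since `R` is Noetherian, and choose a projective `P ↠ M`
with kernel `K`. Since `Tor₁(R/I, M) = 0`, the sequence `0 → K/IK → P/IP → M/IM → 0` is exact,
and it splits because `M/IM` is finitely presented and flat, hence projective, over `R/I`.
Lifting the retraction `P/IP → K/IK` along the projective `P` gives `p : P → K` with
`p ∘ i ≡ 1` modulo `I K`; such an endomorphism is unipotent, hence invertible, so `K → P` splits
and `M` is a direct summand of `P`.
-/

open CategoryTheory TensorProduct LinearMap

theorem Module.End.isNilpotent_of_range_le_smul_top {R K : Type*} [CommRing R] [AddCommGroup K]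
    [Module R K] {I : Ideal R} (hI : IsNilpotent I) {f : Module.End R K}
    (hf : range f ≤ I • ⊤) : IsNilpotent f := by
  obtain ⟨k, hk⟩ := hI
  have hpow (n : ℕ) : range (f ^ n) ≤ I ^ n • ⊤ := by
    induction n with
    | zero => simp
    | succ n ih =>
      calc range (f ^ (n + 1)) = (range (f ^ n)).map f := by
            rw [pow_succ', Module.End.mul_eq_comp, range_comp]
        _ ≤ (I ^ n • ⊤ : Submodule R K).map f := Submodule.map_mono ih
        _ = I ^ n • range f := by rw [Submodule.map_smul'', Submodule.map_top]
        _ ≤ I ^ (n + 1) • ⊤ := by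
            rw [pow_succ, mul_smul]; exact Submodule.smul_mono le_rfl hf
  refine ⟨k, range_eq_bot.mp (eq_bot_iff.mpr ?_)⟩
  simpa [hk] using hpow k

theorem LinearMap.exists_leftInverse_of_lTensor_quotient {R K P : Type*} [CommRing R]
    [AddCommGroup K] [Module R K] [AddCommGroup P] [Module R P] [Module.Projective R P]
    {I : Ideal R} (hI : IsNilpotent I) (i : K →ₗ[R] P)
    (ρ : (R ⧸ I) ⊗[R] P →ₗ[R] (R ⧸ I) ⊗[R] K) (hρ : ρ ∘ₗ i.lTensor (R ⧸ I) = LinearMap.id) :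
    ∃ r : P →ₗ[R] K, r ∘ₗ i = LinearMap.id := by
  set e := quotTensorEquivQuotSMul K I
  obtain ⟨p, hp⟩ := Module.projective_lifting_property (I • ⊤ : Submodule R K).mkQ
    (e.toLinearMap ∘ₗ ρ ∘ₗ TensorProduct.mk R (R ⧸ I) P 1) (Submodule.mkQ_surjective _)
  have hpi : range (p ∘ₗ i - id) ≤ I • ⊤ := by
    rintro _ ⟨x, rfl⟩
    have hρx : e (ρ (1 ⊗ₜ i x)) = e (1 ⊗ₜ x) := congr(e ($hρ (1 ⊗ₜ x)))
    rw [← Submodule.Quotient.mk_eq_zero, sub_apply, Submodule.Quotient.mk_sub, sub_eq_zero]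
    exact (LinearMap.congr_fun hp (i x)).trans <|
      hρx.trans (quotTensorEquivQuotSMul_mk_one_tmul I x)
  obtain ⟨u, hu⟩ := (Module.End.isNilpotent_of_range_le_smul_top hI hpi).isUnit_one_add
  rw [← Module.End.one_eq_id, add_sub_cancel] at hu
  exact ⟨(↑u⁻¹ : Module.End R K) ∘ₗ p, by rw [comp_assoc, ← hu]; exact u.inv_mul⟩

theorem Module.Projective.of_lTensor_quotient_of_isNilpotent {R M P : Type*} [CommRing R]
    [AddCommGroup M] [Module R M] [AddCommGroup P] [Module R P] [Module.Projective R P]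
    {I : Ideal R} (hI : IsNilpotent I) [Module.Projective (R ⧸ I) ((R ⧸ I) ⊗[R] M)]
    (π : P →ₗ[R] M) (hπ : Function.Surjective π)
    (hinj : Function.Injective ((ker π).subtype.lTensor (R ⧸ I))) :
    Module.Projective R M := by
  have hexact : Function.Exact (ker π).subtype π := LinearMap.exact_subtype_ker_map π
  have hπQ : Function.Surjective (π.lTensor (R ⧸ I)) := lTensor_surjective _ hπ
  obtain ⟨σ, hσ⟩ := Module.projective_lifting_property (π.baseChange (R ⧸ I)) LinearMap.id hπQ
  obtain ⟨ρ, hρ⟩ := (((lTensor_exact _ hexact hπ).split_tfae hinj hπQ).out 0 1).mp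
    (⟨σ.restrictScalars R, LinearMap.ext fun y ↦ LinearMap.congr_fun hσ y⟩ :
      ∃ l, π.lTensor (R ⧸ I) ∘ₗ l = LinearMap.id)
  obtain ⟨r, hr⟩ := exists_leftInverse_of_lTensor_quotient hI _ ρ hρ
  obtain ⟨s, hs⟩ := ((hexact.split_tfae (ker π).injective_subtype hπ).out 0 1).mpr
    (⟨r, hr⟩ : ∃ l, l ∘ₗ (ker π).subtype = LinearMap.id)
  exact .of_split s π hs

theorem LinearMap.lTensor_ker_subtype_injective_of_exact {R Q P₂ P₁ P₀ M : Type*} [CommRing R]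
    [AddCommGroup Q] [Module R Q] [AddCommGroup P₂] [Module R P₂] [AddCommGroup P₁] [Module R P₁]
    [AddCommGroup P₀] [Module R P₀] [AddCommGroup M] [Module R M]
    {d₂ : P₂ →ₗ[R] P₁} {d₁ : P₁ →ₗ[R] P₀} {π : P₀ →ₗ[R] M}
    (h₂₁ : Function.Exact d₂ d₁) (h₁₀ : Function.Exact d₁ π)
    (hQ : Function.Exact (d₂.lTensor Q) (d₁.lTensor Q)) :
    Function.Injective ((ker π).subtype.lTensor Q) := by
  set e : P₁ →ₗ[R] ker π := d₁.codRestrict _ fun x ↦ h₁₀.apply_apply_eq_zero x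
  have he : Function.Surjective e := by
    rintro ⟨y, hy⟩
    obtain ⟨x, hx⟩ := (h₁₀ y).mp hy
    exact ⟨x, Subtype.ext hx⟩
  have hed₂ : e ∘ₗ d₂ = 0 := LinearMap.ext fun z ↦ Subtype.ext (h₂₁.apply_apply_eq_zero z)
  rw [injective_iff_map_eq_zero]
  intro x hx
  obtain ⟨y, rfl⟩ := lTensor_surjective Q he x
  rw [← comp_apply, ← lTensor_comp] at hx
  obtain ⟨z, rfl⟩ := (hQ y).mp hx
  rw [← comp_apply, ← lTensor_comp, hed₂, lTensor_zero, zero_apply]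

universe u

namespace CategoryTheory.ProjectiveResolution

variable {R : Type u} [CommRing R] {X : ModuleCat.{u} R} (P : ProjectiveResolution X)

theorem exact_d_one_zero_π : Function.Exact (P.complex.d 1 0).hom (P.π.f 0).hom := by
  have hS : (ShortComplex.mk _ _ P.complex_d_comp_π_f_zero).Exact :=
    ShortComplex.exact_of_g_is_cokernel _ P.isColimitCokernelCofork
  rw [ShortComplex.moduleCat_exact_iff_range_eq_ker] at hS
  exact LinearMap.exact_iff.mpr hS.symm

theorem exact_d_two_one : Function.Exact (P.complex.d 2 1).hom (P.complex.d 1 0).hom := by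
  have hS := P.exact_succ 0
  rw [ShortComplex.moduleCat_exact_iff_range_eq_ker] at hS
  exact LinearMap.exact_iff.mpr hS.symm

theorem lTensor_exact_d_of_isZero_tor {N : ModuleCat.{u} R}
    (h : Limits.IsZero (((Tor (ModuleCat R) 1).obj N).obj X)) :
    Function.Exact ((P.complex.d 2 1).hom.lTensor N) ((P.complex.d 1 0).hom.lTensor N) := by
  set C := ((MonoidalCategory.tensoringLeft (ModuleCat R)).obj N).mapHomologicalComplex _
    |>.obj P.complex
  have hC : C.ExactAt 1 := (HomologicalComplex.exactAt_iff_isZero_homology _ _).mpr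
    (h.of_iso (P.isoLeftDerivedObj _ 1).symm)
  have hS := (C.exactAt_iff' 2 1 0 (by simp) (by simp)).mp hC
  rw [ShortComplex.moduleCat_exact_iff_range_eq_ker] at hS
  exact LinearMap.exact_iff.mpr hS.symm

end CategoryTheory.ProjectiveResolution

theorem stmt4_general {R M : Type} [CommRing R] [IsNoetherianRing R]
    [AddCommGroup M] [Module R M] [Module.Finite R M]
    (hflat : Module.Flat (R ⧸ nilradical R) ((R ⧸ nilradical R) ⊗[R] M))
    (htor : Limits.IsZero
      (((Tor (ModuleCat R) 1).obj (ModuleCat.of R (R ⧸ nilradical R))).obj (ModuleCat.of R M))) :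
    Module.Flat R M := by
  have : Module.FinitePresentation (R ⧸ nilradical R) ((R ⧸ nilradical R) ⊗[R] M) :=
    Module.finitePresentation_of_finite _ _
  have : Module.Projective (R ⧸ nilradical R) ((R ⧸ nilradical R) ⊗[R] M) :=
    Module.Flat.projective_of_finitePresentation
  let P := projectiveResolution (ModuleCat.of R M)
  let π : P.complex.X 0 →ₗ[R] M := (P.π.f 0).hom
  have : Module.Projective R (P.complex.X 0) := (IsProjective.iff_projective _).mpr (P.projective 0)
  have hπ : Function.Surjective π := (ModuleCat.epi_iff_surjective _).mp inferInstance
  have hinj : Function.Injective ((ker π).subtype.lTensor (R ⧸ nilradical R)) :=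
    lTensor_ker_subtype_injective_of_exact P.exact_d_two_one P.exact_d_one_zero_π
      (P.lTensor_exact_d_of_isZero_tor htor)
  have := Module.Projective.of_lTensor_quotient_of_isNilpotent
    (IsNoetherianRing.isNilpotent_nilradical R) π hπ hinj
  exact Module.Flat.of_projective

/-- Local criterion for flatness along a nilpotent thickening (cf. Matsumura Th. 22.3):
let `R → S` be a ring map with `S` a finitely generated `R`-module, `M` a finitely generated
`R`-module, and `R` Noetherian. If `M ⊗_R R_red` is flat over `R_red` and
`Tor₁^R(R_red, M) = 0`, then `M` is flat over `R`, where `R_red = R / nilradical R`. -/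
theorem stmt4 {R S M : Type} [CommRing R] [IsNoetherianRing R]
    [CommRing S] [Algebra R S] [Module.Finite R S]
    [AddCommGroup M] [Module R M] [Module.Finite R M]
    (hflat : Module.Flat (R ⧸ nilradical R) ((R ⧸ nilradical R) ⊗[R] M))
    (htor : Limits.IsZero
      (((Tor (ModuleCat R) 1).obj (ModuleCat.of R (R ⧸ nilradical R))).obj (ModuleCat.of R M))) :
    Module.Flat R M :=
  stmt4_general hflat htor
end
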